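/- (Remark 3.3: comparison of convergence factors.) Let J and J' be nonempty subsets of {1,…,n}. Then 1 − (‖A_J‖_F²/σ_max(A_J)²) · (1/2)·(‖A‖_F²/(‖A‖_F² − ‖A_{J'}‖_F²) + 1) · σ_min(A)²/‖A‖_F² ≤ 1 − (1/2)·(‖A‖_F²/(‖A‖_F² − min_{1≤j≤n}‖A_(j)‖₂²) + 1) · σ_min(A)²/‖A‖_F², provided J' is a proper subset of {1,…,n} (so that ‖A‖_F² − ‖A_{J'}‖_F² > 0). That is, the GBGS convergence factor with θ = 1/2 is at most the GRCD convergence factor. -/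

import Mathlib

noncomputable section
open Matrix

/-- Squared Euclidean norm `‖v‖₂²` of a vector. -/
def norm2 {ι : Type*} [Fintype ι] (v : ι → ℝ) : ℝ := ∑ i, (v i) ^ 2

/-- Squared Frobenius norm `‖A‖_F²` of a matrix. -/
def frob2 {ι κ : Type*} [Fintype ι] [Fintype κ] (A : Matrix ι κ ℝ) : ℝ :=
  ∑ i, ∑ j, (A i j) ^ 2

/-- Squared largest singular value `σ_max(B)²`, i.e. the largest eigenvalue of `Bᵀ * B`. -/
def sigmaMaxSq {ι κ : Type*} [Fintype ι] [Fintype κ] [DecidableEq κ]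
    (B : Matrix ι κ ℝ) : ℝ :=
  sSup (Set.range (show (Bᵀ * B).IsHermitian by
    rw [← Matrix.conjTranspose_eq_transpose_of_trivial]
    exact Matrix.isHermitian_conjTranspose_mul_self B).eigenvalues)

/-- Squared smallest singular value `σ_min(B)²`, i.e. the smallest eigenvalue of `Bᵀ * B`. -/
def sigmaMinSq {ι κ : Type*} [Fintype ι] [Fintype κ] [DecidableEq κ]
    (B : Matrix ι κ ℝ) : ℝ :=
  sInf (Set.range (show (Bᵀ * B).IsHermitian by
    rw [← Matrix.conjTranspose_eq_transpose_of_trivial]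
    exact Matrix.isHermitian_conjTranspose_mul_self B).eigenvalues)

/-- Squared Euclidean norm `‖A_(j)‖₂²` of the `j`-th column of `A`. -/
def col2 {m n : ℕ} (A : Matrix (Fin m) (Fin n) ℝ) (j : Fin n) : ℝ := ∑ i, (A i j) ^ 2

/-- `A` has full column rank: its columns are linearly independent. -/
def FullColRank {m n : ℕ} (A : Matrix (Fin m) (Fin n) ℝ) : Prop :=
  LinearIndependent ℝ fun j : Fin n => (fun i => A i j : Fin m → ℝ)

/-- `max_{1 ≤ j ≤ n} |A_(j)ᵀ r|² / ‖A_(j)‖₂²`. -/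
def maxRatio {m n : ℕ} (A : Matrix (Fin m) (Fin n) ℝ) (r : Fin m → ℝ) : ℝ :=
  ⨆ j : Fin n, ((Aᵀ *ᵥ r) j) ^ 2 / col2 A j

/-- The greedy parameter
`ε = (θ/‖Aᵀr‖₂²)·max_j |A_(j)ᵀ r|²/‖A_(j)‖₂² + (1−θ)/‖A‖_F²`. -/
def eps {m n : ℕ} (A : Matrix (Fin m) (Fin n) ℝ) (r : Fin m → ℝ) (θ : ℝ) : ℝ :=
  θ / norm2 (Aᵀ *ᵥ r) * maxRatio A r + (1 - θ) / frob2 A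

open Classical in
/-- The greedy index set `J = { j : |A_(j)ᵀ r|² ≥ ε ‖Aᵀr‖₂² ‖A_(j)‖₂² }`. -/
def greedySet {m n : ℕ} (A : Matrix (Fin m) (Fin n) ℝ) (r : Fin m → ℝ) (θ : ℝ) :
    Finset (Fin n) :=
  Finset.univ.filter fun j =>
    eps A r θ * norm2 (Aᵀ *ᵥ r) * col2 A j ≤ ((Aᵀ *ᵥ r) j) ^ 2

/-- The column submatrix `A_J` of `A`, with columns indexed by `J`. -/
def subCols {m n : ℕ} (A : Matrix (Fin m) (Fin n) ℝ) (J : Finset (Fin n)) :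
    Matrix (Fin m) {j // j ∈ J} ℝ :=
  A.submatrix id fun j => (j : Fin n)

/-- The submatrix `I_J` of the `n × n` identity with columns indexed by `J`. -/
def subId {n : ℕ} (J : Finset (Fin n)) : Matrix (Fin n) {j // j ∈ J} ℝ :=
  (1 : Matrix (Fin n) (Fin n) ℝ).submatrix id fun j => (j : Fin n)

/-- Moore–Penrose pseudoinverse of a full-column-rank matrix: `B† = (BᵀB)⁻¹Bᵀ`. -/
def pinv {ι κ : Type*} [Fintype ι] [Fintype κ] [DecidableEq κ] (B : Matrix ι κ ℝ) :
    Matrix κ ι ℝ :=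
  (Bᵀ * B)⁻¹ * Bᵀ

/-- The matrix `Ã_J` whose columns are the normalized columns `A_(j)/‖A_(j)‖₂`, `j ∈ J`. -/
def tildeA {m n : ℕ} (A : Matrix (Fin m) (Fin n) ℝ) (J : Finset (Fin n)) :
    Matrix (Fin m) {j // j ∈ J} ℝ :=
  Matrix.of fun i j => A i (j : Fin n) / Real.sqrt (col2 A (j : Fin n))

/-- The matrix `Ĩ_J` whose columns are `e_j/‖A_(j)‖₂`, `j ∈ J`. -/
def tildeI {m n : ℕ} (A : Matrix (Fin m) (Fin n) ℝ) (J : Finset (Fin n)) :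
    Matrix (Fin n) {j // j ∈ J} ℝ :=
  Matrix.of fun i j => (if i = (j : Fin n) then 1 else 0) / Real.sqrt (col2 A (j : Fin n))


/-! Since `σ_max(A_J)² ≤ ‖A_J‖_F²` (the trace of `A_Jᵀ A_J` is the sum of its nonnegative
eigenvalues), the GBGS rate carries an extra factor `‖A_J‖_F² / σ_max(A_J)² ≥ 1`. And
`min_j ‖A_(j)‖₂² ≤ ‖A_{J'}‖_F² < ‖A‖_F²`, so the GBGS factor `‖A‖_F² / (‖A‖_F² - ‖A_{J'}‖_F²)`
dominates the GRCD factor `‖A‖_F² / (‖A‖_F² - min_j ‖A_(j)‖₂²)`. -/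

section ColumnNorms

variable {m n : ℕ} (A : Matrix (Fin m) (Fin n) ℝ)

lemma col2_nonneg (j : Fin n) : 0 ≤ col2 A j :=
  Finset.sum_nonneg fun i _ => sq_nonneg (A i j)

lemma FullColRank.col2_pos {A : Matrix (Fin m) (Fin n) ℝ} (hA : FullColRank A) (j : Fin n) :
    0 < col2 A j := by
  obtain ⟨i, hi⟩ := Function.ne_iff.mp (hA.ne_zero j)
  exact Finset.sum_pos' (fun i _ => sq_nonneg _) ⟨i, Finset.mem_univ i, sq_pos_of_ne_zero hi⟩

lemma frob2_subCols (K : Finset (Fin n)) : frob2 (subCols A K) = ∑ j ∈ K, col2 A j := by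
  rw [frob2, Finset.sum_comm, ← Finset.sum_coe_sort K (col2 A)]
  rfl

lemma frob2_eq_sum_col2 : frob2 A = ∑ j, col2 A j := by
  rw [frob2, Finset.sum_comm]
  rfl

lemma iInf_col2_le_frob2_subCols {K : Finset (Fin n)} (hK : K.Nonempty) :
    ⨅ j, col2 A j ≤ frob2 (subCols A K) := by
  obtain ⟨j, hj⟩ := hK
  rw [frob2_subCols]
  exact (ciInf_le (Finite.bddBelow_range _) j).trans
    (Finset.single_le_sum (fun j _ => col2_nonneg A j) hj)

lemma FullColRank.frob2_subCols_pos {A : Matrix (Fin m) (Fin n) ℝ} (hA : FullColRank A)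
    {K : Finset (Fin n)} (hK : K.Nonempty) : 0 < frob2 (subCols A K) := by
  rw [frob2_subCols]
  exact Finset.sum_pos (fun j _ => hA.col2_pos j) hK

lemma FullColRank.frob2_subCols_lt {A : Matrix (Fin m) (Fin n) ℝ} (hA : FullColRank A)
    {K : Finset (Fin n)} (hK : K ≠ Finset.univ) : frob2 (subCols A K) < frob2 A := by
  obtain ⟨j, hj_univ, hjK⟩ := Finset.exists_of_ssubset (Finset.ssubset_univ_iff.mpr hK)
  rw [frob2_subCols, frob2_eq_sum_col2, ← sub_pos,
    ← Finset.sum_sdiff_eq_sub (Finset.subset_univ K)]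
  exact Finset.sum_pos' (fun j _ => col2_nonneg A j)
    ⟨j, Finset.mem_sdiff.mpr ⟨hj_univ, hjK⟩, hA.col2_pos j⟩

end ColumnNorms

section SingularValues

variable {ι κ : Type*} [Fintype ι]

lemma isHermitian_transpose_mul_self (B : Matrix ι κ ℝ) : (Bᵀ * B).IsHermitian := by
  rw [← conjTranspose_eq_transpose_of_trivial]
  exact isHermitian_conjTranspose_mul_self B

variable [Fintype κ] [DecidableEq κ] (B : Matrix ι κ ℝ)

lemma frob2_eq_sum_eigenvalues :
    frob2 B = ∑ i, (isHermitian_transpose_mul_self B).eigenvalues i := by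
  have htrace : (Bᵀ * B).trace = frob2 B := by
    simp only [trace, diag, mul_apply, transpose_apply, frob2, ← sq]
    exact Finset.sum_comm
  rw [← htrace, (isHermitian_transpose_mul_self B).trace_eq_sum_eigenvalues]
  simp

lemma sigmaMaxSq_le_frob2 : sigmaMaxSq B ≤ frob2 B := by
  have hfrob := frob2_eq_sum_eigenvalues B
  refine Real.sSup_le ?_ (hfrob ▸ Finset.sum_nonneg fun i _ =>
    eigenvalues_conjTranspose_mul_self_nonneg B i)
  rintro x ⟨i, rfl⟩
  exact hfrob ▸ Finset.single_le_sum (fun i _ => eigenvalues_conjTranspose_mul_self_nonneg B i)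
    (Finset.mem_univ i)

lemma sigmaMaxSq_pos_of_frob2_pos (hB : 0 < frob2 B) : 0 < sigmaMaxSq B := by
  obtain ⟨i, hi⟩ : ∃ i, 0 < (isHermitian_transpose_mul_self B).eigenvalues i := by
    by_contra! hle
    exact (frob2_eq_sum_eigenvalues B ▸ hB).not_ge (Finset.sum_nonpos fun i _ => hle i)
  exact hi.trans_le (le_csSup (Set.finite_range _).bddAbove ⟨i, rfl⟩)

lemma one_le_frob2_div_sigmaMaxSq (hB : 0 < frob2 B) : 1 ≤ frob2 B / sigmaMaxSq B :=
  (one_le_div (sigmaMaxSq_pos_of_frob2_pos B hB)).mpr (sigmaMaxSq_le_frob2 B)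

lemma sigmaMinSq_nonneg : 0 ≤ sigmaMinSq B :=
  Real.sInf_nonneg <| by
    rintro x ⟨i, rfl⟩
    exact eigenvalues_conjTranspose_mul_self_nonneg B i

end SingularValues

lemma one_sub_mul_le_one_sub_mul {R q q' s : ℝ} (hR : 1 ≤ R) (hq : 0 ≤ q) (hqq' : q ≤ q')
    (hs : 0 ≤ s) : 1 - R * (1 / 2 * (q' + 1)) * s ≤ 1 - 1 / 2 * (q + 1) * s := by
  have hfactor : 1 / 2 * (q + 1) ≤ R * (1 / 2 * (q' + 1)) :=
    calc 1 / 2 * (q + 1) ≤ 1 / 2 * (q' + 1) := by linarith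
      _ ≤ R * (1 / 2 * (q' + 1)) := le_mul_of_one_le_left (by linarith) hR
  exact sub_le_sub_left (mul_le_mul_of_nonneg_right hfactor hs) 1

/-- Remark 3.3: the GBGS convergence factor with `θ = 1/2` is at most
the GRCD convergence factor. -/
theorem stmt13 {m n : ℕ} (A : Matrix (Fin m) (Fin n) ℝ) (hA : FullColRank A)
    (J J' : Finset (Fin n)) (hJ : J.Nonempty) (hJ'ne : J'.Nonempty)
    (hJ' : J' ≠ Finset.univ) :
    1 - frob2 (subCols A J) / sigmaMaxSq (subCols A J) *
        (1 / 2 * (frob2 A / (frob2 A - frob2 (subCols A J')) + 1)) *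
        (sigmaMinSq A / frob2 A) ≤
      1 - 1 / 2 * (frob2 A / (frob2 A - ⨅ j : Fin n, col2 A j) + 1) *
        (sigmaMinSq A / frob2 A) := by
  have hJ'lt := hA.frob2_subCols_lt hJ'
  have hmin_le := iInf_col2_le_frob2_subCols A hJ'ne
  have hfrob_pos : 0 < frob2 A := (hA.frob2_subCols_pos hJ'ne).trans hJ'lt
  refine one_sub_mul_le_one_sub_mul
    (one_le_frob2_div_sigmaMaxSq _ (hA.frob2_subCols_pos hJ))
    (div_nonneg hfrob_pos.le (by linarith)) ?_
    (div_nonneg (sigmaMinSq_nonneg A) hfrob_pos.le)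
  gcongr
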